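/- A matroid A on K(V), |V| ≥ m+1, with circuit family C is an m-dimensional abstract rigidity matroid if and only if (Z1) no circuit contains a vertex of valence less than m+1, and (Z2) every K(U) with |U| = m+2 is a circuit. -/

import Mathlib

open Matroid Set

/-- A circuit of a matroid: a minimal dependent set. -/
def Matroid.IsCircuit' {α : Type*} (M : Matroid α) (C : Set α) : Prop :=
  M.Dep C ∧ ∀ D, D ⊂ C → M.Indep D

/-- A cocircuit: a circuit of the dual matroid. -/
def Matroid.IsCocircuit' {α : Type*} (M : Matroid α) (C : Set α) : Prop :=
  M✶.IsCircuit' C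

/-- A hyperplane: a maximal subset of the ground set not containing a basis. -/
def Matroid.IsHyperplane {α : Type*} (M : Matroid α) (H : Set α) : Prop :=
  H ⊆ M.E ∧ (¬ ∃ B ⊆ H, M.IsBase B) ∧
    ∀ H', H ⊂ H' → H' ⊆ M.E → ∃ B ⊆ H', M.IsBase B

/-- The rank of a set: the size of a largest independent subset. -/
noncomputable def Matroid.rk {α : Type*} (M : Matroid α) (X : Set α) : ℕ :=
  sSup {n | ∃ I ⊆ X, M.Indep I ∧ I.ncard = n}

/-- `cK U` is the edge set of the complete graph on the vertex set `U`. -/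
def cK {V : Type*} (U : Set V) : Set (Sym2 V) :=
  {e | ¬ e.IsDiag ∧ ∀ v ∈ e, v ∈ U}

/-- The support (set of endpoints) of an edge set. -/
def supp {V : Type*} (E : Set (Sym2 V)) : Set V := {v | ∃ e ∈ E, v ∈ e}

/-- An edge set is rigid if its closure is the complete graph on its support. -/
def Rigid {V : Type*} (A : Matroid (Sym2 V)) (E : Set (Sym2 V)) : Prop :=
  A.closure E = cK (supp E)

/-- `A` is an `m`-dimensional abstract rigidity matroid on `K(W)`. -/
def IsARMOn {V : Type*} (m : ℕ) (W : Set V) (A : Matroid (Sym2 V)) : Prop :=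
  A.E = cK W ∧
  (∀ E F : Set (Sym2 V), E ⊆ cK W → F ⊆ cK W →
    (supp E ∩ supp F).ncard < m →
    A.closure (E ∪ F) ⊆ cK (supp E) ∪ cK (supp F)) ∧
  (∀ E F : Set (Sym2 V), E ⊆ cK W → F ⊆ cK W →
    Rigid A E → Rigid A F → m ≤ (supp E ∩ supp F).ncard →
    Rigid A (E ∪ F))

/-- The star of a vertex: all edges containing it. -/
def starv {V : Type*} (v : V) : Set (Sym2 V) := {e | ¬ e.IsDiag ∧ v ∈ e}

/-- `C` is a vertex star minus `m-1` edges. -/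
def IsStarMinus {V : Type*} (m : ℕ) (C : Set (Sym2 V)) : Prop :=
  ∃ v : V, ∃ D ⊆ starv v, D.ncard = m - 1 ∧ C = starv v \ D

/-- The valence (degree) of a vertex in an edge set. -/
noncomputable def valence {V : Type*} (C : Set (Sym2 V)) (v : V) : ℕ :=
  {e ∈ C | v ∈ e}.ncard

/-- `bigstar V' = K(V) \ K(V \ V')`. -/
def bigstar {V : Type*} (V' : Set V) : Set (Sym2 V) :=
  cK (univ : Set V) \ cK (V'ᶜ)

/-- The family `H_m(V)` of unions of two complete graphs covering `V` and
meeting in `m-1` vertices. -/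
def HmFam (m : ℕ) (V : Type*) : Set (Set (Sym2 V)) :=
  {H | ∃ V₁ V₂ : Set V, V₁ ∪ V₂ = univ ∧ (V₁ ∩ V₂).ncard = m - 1 ∧
    ¬ V₁ ⊆ V₂ ∧ ¬ V₂ ⊆ V₁ ∧ H = cK V₁ ∪ cK V₂}

/-- The family `H_m^{(1)}(K(X))` of sets `Δ_v^A` relative to a vertex set `X`. -/
def Hm1Fam {V : Type*} (m : ℕ) (X : Set V) : Set (Set (Sym2 V)) :=
  {H | ∃ v ∈ X, ∃ A ⊆ X \ {v}, A.ncard = m - 1 ∧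
    H = cK ({v} ∪ A) ∪ cK (X \ {v})}

/-!
(C1) ⇒ (Z1): if `v` had valence at most `m` in a circuit `C ∋ e₀ ∋ v`, apply (C1) to the edges
of `C` avoiding `v` and the other edges at `v`; their supports meet in fewer than `m` vertices,
yet `e₀` lies in the closure of their union. (C1) and (C2) ⇒ (Z2): gluing the rigid graphs
`K(U - a)` and `K(U - c)` along `m` vertices spans the edge `ac`, so `K(U)` is dependent, and by
(Z1) the only circuit inside `K(U)` is `K(U)` itself.

Conversely, (Z1) makes every `K(S)` closed and `K(S)` independent for `|S| ≤ m + 1`, and joining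
a new vertex to `m` old ones keeps independence. With the circuits of (Z2) such a cone spans all
edges at the new vertex, so `rank K(S) = m |S| - (m+1 choose 2)` once `|S| ≥ m`. (C2) follows
because every edge `pq` between the two supports closes a circuit `K(W ∪ {p, q})` with `W` in
their intersection. For (C1), enlarge the supports to `W₁ ∪ W₂ = V` with `|W₁ ∩ W₂| = m - 1`;
one crossing edge in the closure of `K(W₁) ∪ K(W₂)` would, by the same circuits, bring in all
crossing edges, but submodularity bounds the rank of `K(W₁) ∪ K(W₂)` by `rank K(V) - 1`.
-/

section CompleteGraphs

variable {V : Type*} {S T : Set V} {E F : Set (Sym2 V)} {a c v x y : V}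

lemma pair_mem_cK : s(x, y) ∈ cK S ↔ x ≠ y ∧ x ∈ S ∧ y ∈ S := by
  simp [cK]

lemma cK_mono (h : S ⊆ T) : cK S ⊆ cK T :=
  fun _ he => ⟨he.1, fun v hv => h (he.2 v hv)⟩

lemma cK_empty : cK (∅ : Set V) = ∅ := by
  ext e
  induction e with
  | _ x y => simp [pair_mem_cK]

lemma cK_inter (S T : Set V) : cK (S ∩ T) = cK S ∩ cK T := by
  ext e
  induction e with
  | _ x y => simp only [pair_mem_cK, mem_inter_iff]; tauto

lemma cK_insert (ha : a ∉ S) : cK (insert a S) = cK S ∪ (fun x => s(a, x)) '' S := by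
  ext e
  induction e with
  | _ x y =>
    simp only [pair_mem_cK, mem_union, mem_image, mem_insert_iff, Sym2.eq_iff]
    grind

lemma cK_sdiff_pair (hac : a ≠ c) : cK S \ {s(a, c)} = cK (S \ {a}) ∪ cK (S \ {c}) := by
  ext e
  induction e with
  | _ x y =>
    simp only [mem_sdiff, pair_mem_cK, mem_singleton_iff, Sym2.eq_iff, mem_union]
    grind

lemma cK_insert_insert_subset :
    cK (insert x (insert y S)) ⊆ insert s(x, y) (cK (insert x S) ∪ cK (insert y S)) := by
  intro e
  induction e with
  | _ p q =>
    simp only [pair_mem_cK, mem_insert_iff, mem_union, Sym2.eq_iff]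
    grind

lemma cK_union_subset :
    cK (S ∪ T) ⊆ cK S ∪ cK T ∪ image2 (fun p q => s(p, q)) (S \ T) (T \ S) := by
  intro e
  induction e with
  | _ p q =>
    simp only [pair_mem_cK, mem_union, mem_image2, mem_sdiff, Sym2.eq_iff]
    grind

lemma supp_empty : supp (∅ : Set (Sym2 V)) = ∅ := by
  simp [supp]

lemma supp_mono (h : E ⊆ F) : supp E ⊆ supp F :=
  fun _ ⟨e, he, hv⟩ => ⟨e, h he, hv⟩

lemma supp_union : supp (E ∪ F) = supp E ∪ supp F := by
  ext v
  simp only [supp, mem_union, mem_ofPred_eq]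
  grind

lemma supp_cK_subset : supp (cK S) ⊆ S :=
  fun _ ⟨_, he, hv⟩ => he.2 _ hv

lemma supp_cK (h : 1 < S.ncard) : supp (cK S) = S := by
  refine supp_cK_subset.antisymm fun v hv => ?_
  obtain ⟨w, hw, hwv⟩ := exists_ne_of_one_lt_ncard h v
  exact ⟨s(v, w), pair_mem_cK.2 ⟨hwv.symm, hv, hw⟩, Sym2.mem_mk_left v w⟩

lemma subset_cK_supp (h : E ⊆ cK univ) : E ⊆ cK (supp E) :=
  fun e he => ⟨(h he).1, fun _ hv => ⟨e, he, hv⟩⟩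

lemma valence_cK (hv : v ∈ S) : valence (cK S) v = S.ncard - 1 := by
  have h : {e ∈ cK S | v ∈ e} = (fun x => s(v, x)) '' (S \ {v}) := by
    ext e
    induction e with
    | _ x y =>
      simp only [mem_ofPred_eq, pair_mem_cK, mem_image, mem_sdiff, mem_singleton_iff,
        Sym2.eq_iff, Sym2.mem_iff]
      grind
  rw [valence, h, ncard_image_of_injective _ fun _ _ => Sym2.congr_right.1,
    ncard_sdiff_singleton_of_mem hv]

variable [Finite V]

lemma ncard_cK (S : Set V) : (cK S).ncard = S.ncard.choose 2 := by
  classical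
  have hS := S.toFinite
  have h : cK S = ↑(hS.toFinset.offDiag.image (Function.uncurry Sym2.mk)) := by
    ext e
    induction e with
    | _ x y =>
      simp only [pair_mem_cK, Finset.coe_image, mem_image, Finset.mem_coe, Finset.mem_offDiag,
        Finite.mem_toFinset, Prod.exists, Function.uncurry_apply_pair, Sym2.eq_iff]
      grind
  rw [h, ncard_coe_finset, Sym2.card_image_offDiag, ncard_eq_toFinset_card S hS]

lemma valence_mono {C D : Set (Sym2 V)} (h : C ⊆ D) : valence C v ≤ valence D v :=
  ncard_le_ncard fun _ he => ⟨h he.1, he.2⟩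

end CompleteGraphs

lemma Matroid.isCircuit'_iff_isCircuit {α : Type*} {M : Matroid α} {C : Set α} :
    M.IsCircuit' C ↔ M.IsCircuit C := by
  rw [isCircuit_iff_forall_ssubset]
  rfl

section Conditions

variable {V : Type*}

/-- Condition (Z1). -/
def CircuitValenceBound (m : ℕ) (A : Matroid (Sym2 V)) : Prop :=
  ∀ C, A.IsCircuit C → ∀ v ∈ supp C, m + 1 ≤ valence C v

/-- Condition (Z2). -/
def CliquesAreCircuits (m : ℕ) (A : Matroid (Sym2 V)) : Prop :=
  ∀ U : Set V, U.ncard = m + 2 → A.IsCircuit (cK U)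

lemma cK_subset_ground {A : Matroid (Sym2 V)} (hE : A.E = cK univ) (S : Set V) : cK S ⊆ A.E :=
  hE ▸ cK_mono (subset_univ S)

end Conditions

namespace CircuitValenceBound

variable {V : Type*} {m : ℕ} {A : Matroid (Sym2 V)} {S T U : Set V}
  {B C : Set (Sym2 V)} {e : Sym2 V} {a v : V}

lemma exists_ne_mem (hZ1 : CircuitValenceBound m A) (hm : 0 < m) (hC : A.IsCircuit C)
    (he : e ∈ C) (hv : v ∈ e) : ∃ f ∈ C, f ≠ e ∧ v ∈ f := by
  have h : 1 < valence C v := by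
    have := hZ1 C hC v ⟨e, he, hv⟩
    omega
  obtain ⟨f, hf, hfe⟩ := exists_ne_of_one_lt_ncard h e
  exact ⟨f, hf.1, hfe, hf.2⟩

lemma closure_cK (hZ1 : CircuitValenceBound m A) (hm : 0 < m) (hE : A.E = cK univ)
    (S : Set V) : A.closure (cK S) = cK S := by
  refine subset_antisymm (fun e he => ?_) (A.subset_closure _ (cK_subset_ground hE S))
  by_contra heS
  obtain ⟨C, hCS, hC, heC⟩ := exists_isCircuit_of_mem_closure he heS
  have heE : e ∈ cK univ := hE ▸ A.closure_subset_ground _ he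
  refine heS ⟨heE.1, fun v hv => ?_⟩
  obtain ⟨f, hfC, hfe, hvf⟩ := hZ1.exists_ne_mem hm hC heC hv
  exact ((hCS hfC).resolve_left hfe).2 v hvf

variable [Finite V]

lemma indep_cK (hZ1 : CircuitValenceBound m A) (hE : A.E = cK univ) (hS : S.ncard ≤ m + 1) :
    A.Indep (cK S) := by
  rw [indep_iff_forall_subset_not_isCircuit (cK_subset_ground hE S)]
  intro C hCS hC
  obtain ⟨e, he⟩ := hC.nonempty
  have hv := Sym2.out_fst_mem e
  have h₁ := hZ1 C hC _ ⟨e, he, hv⟩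
  have h₂ := valence_mono hCS (v := e.out.1)
  rw [valence_cK ((hCS he).2 _ hv)] at h₂
  omega

lemma indep_union_image_pair (hZ1 : CircuitValenceBound m A) (hE : A.E = cK univ)
    (hB : A.Indep B) (haB : a ∉ supp B) (haT : a ∉ T) (hT : T.ncard ≤ m) :
    A.Indep (B ∪ (fun x => s(a, x)) '' T) := by
  have hsub : B ∪ (fun x => s(a, x)) '' T ⊆ A.E := by
    refine union_subset hB.subset_ground ?_
    rintro _ ⟨x, hx, rfl⟩
    exact hE ▸ pair_mem_cK.2 ⟨(ne_of_mem_of_not_mem hx haT).symm, trivial, trivial⟩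
  rw [indep_iff_forall_subset_not_isCircuit hsub]
  intro C hCB hC
  by_cases ha : a ∈ supp C
  · have h₁ := hZ1 C hC a ha
    have hstar : {e ∈ C | a ∈ e} ⊆ (fun x => s(a, x)) '' T := fun e ⟨heC, hae⟩ =>
      (hCB heC).resolve_left fun heB => haB ⟨e, heB, hae⟩
    have h₂ : valence C a ≤ T.ncard := (ncard_le_ncard hstar).trans (ncard_image_le T.toFinite)
    omega
  · refine hC.not_indep (hB.subset fun e he => (hCB he).resolve_right ?_)
    rintro ⟨x, -, rfl⟩
    exact ha ⟨_, he, Sym2.mem_mk_left a x⟩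

lemma eq_cK_of_isCircuit_subset (hZ1 : CircuitValenceBound m A) (hU : U.ncard = m + 2)
    (hC : A.IsCircuit C) (hCU : C ⊆ cK U) : C = cK U := by
  -- a vertex of `C` has at least `m + 1 = |U| - 1` edges in `C`: all its edges in `K(U)`
  have hstar : ∀ z ∈ supp C, {e ∈ cK U | z ∈ e} ⊆ C := by
    intro z hz
    have heq : {e ∈ C | z ∈ e} = {e ∈ cK U | z ∈ e} := by
      refine eq_of_subset_of_ncard_le (fun e he => ⟨hCU he.1, he.2⟩) ?_
      have h₁ := hZ1 C hC z hz
      have h₂ := valence_cK (supp_cK_subset (supp_mono hCU hz))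
      rw [hU] at h₂
      unfold valence at h₁ h₂
      omega
    exact heq ▸ sep_subset _ _
  refine hCU.antisymm fun e he => ?_
  induction e with | _ x y => ?_
  obtain ⟨hxy, hx, hy⟩ := pair_mem_cK.1 he
  obtain ⟨f, hf⟩ := hC.nonempty
  have hz : f.out.1 ∈ supp C := ⟨f, hf, Sym2.out_fst_mem f⟩
  have hxC : x ∈ supp C := by
    obtain hxz | hxz := eq_or_ne f.out.1 x
    · exact hxz ▸ hz
    exact ⟨s(f.out.1, x), hstar _ hz ⟨pair_mem_cK.2 ⟨hxz, supp_cK_subset (supp_mono hCU hz), hx⟩,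
      Sym2.mem_mk_left _ x⟩, Sym2.mem_mk_right _ x⟩
  exact hstar x hxC ⟨he, Sym2.mem_mk_left x y⟩

end CircuitValenceBound

lemma Nat.choose_two_add_choose_two_succ (n : ℕ) : n.choose 2 + (n + 1).choose 2 = n * n := by
  induction n with
  | zero => rfl
  | succ k ih =>
    have h₁ : (k + 1).choose 2 = k.choose 1 + k.choose 2 := Nat.choose_succ_succ' k 1
    have h₂ : (k + 2).choose 2 = (k + 1).choose 1 + (k + 1).choose 2 :=
      Nat.choose_succ_succ' (k + 1) 1
    rw [Nat.choose_one_right] at h₁ h₂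
    nlinarith

lemma Nat.choose_two_pred_add_choose_two_succ {m : ℕ} (hm : 0 < m) :
    (m - 1).choose 2 + (m + 1).choose 2 = m * (m - 1) + 1 := by
  obtain ⟨k, rfl⟩ : ∃ k, m = k + 1 := ⟨m - 1, by omega⟩
  have h₁ := Nat.choose_two_add_choose_two_succ k
  have h₂ := Nat.choose_two_add_choose_two_succ (k + 1)
  have h₃ : (k + 1).choose 2 = k.choose 1 + k.choose 2 := Nat.choose_succ_succ' k 1
  rw [Nat.choose_one_right] at h₃
  rw [Nat.add_sub_cancel]
  nlinarith

namespace CliquesAreCircuits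

variable {V : Type*} [Finite V] {m : ℕ} {A : Matroid (Sym2 V)} {S W W₁ W₂ : Set V}
  {X : Set (Sym2 V)} {a c x y y' : V}

lemma pair_mem_closure (hZ2 : CliquesAreCircuits m A) (hW : W.ncard = m) (haW : a ∉ W)
    (hcW : c ∉ W) (hac : a ≠ c) (ha : cK (insert a W) ⊆ A.closure X)
    (hc : cK (insert c W) ⊆ A.closure X) : s(a, c) ∈ A.closure X := by
  have haW' : a ∉ insert c W := by simp [hac, haW]
  have hcW' : c ∉ insert a W := by simp [hac.symm, hcW]
  have hU : (insert a (insert c W)).ncard = m + 2 := by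
    rw [ncard_insert_of_notMem haW', ncard_insert_of_notMem hcW, hW]
  have hsplit : cK (insert a (insert c W)) \ {s(a, c)} ⊆ A.closure X := by
    rw [cK_sdiff_pair hac, insert_sdiff_self_of_notMem haW', insert_comm,
      insert_sdiff_self_of_notMem hcW']
    exact union_subset hc ha
  refine closure_subset_closure_of_subset_closure hsplit
    ((hZ2 _ hU).mem_closure_sdiff_singleton_of_mem ?_)
  exact pair_mem_cK.2 ⟨hac, mem_insert _ _, mem_insert_of_mem _ (mem_insert _ _)⟩

lemma eRk_cK_insert (hZ2 : CliquesAreCircuits m A) (hZ1 : CircuitValenceBound m A)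
    (hE : A.E = cK univ) (haS : a ∉ S) (hS : m ≤ S.ncard) :
    A.eRk (cK (insert a S)) = A.eRk (cK S) + m := by
  obtain ⟨B, hB⟩ := A.exists_isBasis (cK S) (cK_subset_ground hE S)
  obtain ⟨T, hTS, hT⟩ := exists_subset_card_eq hS
  have haT : a ∉ T := fun h => haS (hTS h)
  have haB : a ∉ supp B := fun h => haS (supp_cK_subset (supp_mono hB.subset h))
  set B' := B ∪ (fun x => s(a, x)) '' T
  have hB' : A.Indep B' := hZ1.indep_union_image_pair hE hB.indep haB haT hT.le
  have hTB' : (fun x => s(a, x)) '' T ⊆ A.closure B' :=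
    subset_union_right.trans (A.subset_closure B' hB'.subset_ground)
  have hSB' : cK S ⊆ A.closure B' :=
    hB.subset_closure.trans (A.closure_subset_closure subset_union_left)
  have hspan : cK (insert a S) ⊆ A.closure B' := by
    rw [cK_insert haS]
    refine union_subset hSB' ?_
    rintro _ ⟨x, hx, rfl⟩
    by_cases hxT : x ∈ T
    · exact hTB' ⟨x, hxT, rfl⟩
    refine hZ2.pair_mem_closure hT haT hxT (ne_of_mem_of_not_mem hx haS).symm ?_
      ((cK_mono (insert_subset hx hTS)).trans hSB')
    rw [cK_insert haT]
    exact union_subset ((cK_mono hTS).trans hSB') hTB'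
  have hB'S : B' ⊆ cK (insert a S) := by
    refine union_subset (hB.subset.trans (cK_mono (subset_insert a S))) ?_
    rw [cK_insert haS]
    exact (image_mono hTS).trans subset_union_right
  have hdisj : Disjoint B ((fun x => s(a, x)) '' T) := by
    rw [disjoint_right]
    rintro _ ⟨x, -, rfl⟩ h
    exact haB ⟨_, h, Sym2.mem_mk_left a x⟩
  rw [(hB'.isBasis_of_subset_of_subset_closure hB'S hspan).eRk_eq_encard, hB.eRk_eq_encard,
    encard_union_eq hdisj, Function.Injective.encard_image (fun _ _ => Sym2.congr_right.1),
    ← T.toFinite.cast_ncard_eq, hT]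

lemma eRk_cK (hZ2 : CliquesAreCircuits m A) (hZ1 : CircuitValenceBound m A)
    (hE : A.E = cK univ) (hS : m ≤ S.ncard) :
    A.eRk (cK S) + (m + 1).choose 2 = m * S.ncard := by
  obtain ⟨n, hn⟩ : ∃ n, S.ncard = m + n := ⟨S.ncard - m, by omega⟩
  induction n generalizing S with
  | zero =>
    rw [(hZ1.indep_cK hE (by omega)).eRk_eq_encard, ← (cK S).toFinite.cast_ncard_eq, ncard_cK,
      hn, add_zero]
    exact_mod_cast Nat.choose_two_add_choose_two_succ m
  | succ n ih =>
    obtain ⟨a, ha⟩ := nonempty_of_ncard_ne_zero (by omega : S.ncard ≠ 0)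
    have hS' : (S \ {a}).ncard = m + n := by
      rw [ncard_sdiff_singleton_of_mem ha]
      omega
    have h := hZ2.eRk_cK_insert hZ1 hE (a := a) (fun h => h.2 rfl) (by omega : m ≤ (S \ {a}).ncard)
    rw [insert_sdiff_self_of_mem ha] at h
    rw [h, add_right_comm, ih (by omega) hS', hn, hS']
    push_cast
    ring

lemma pair_mem_closure_of_cross (hZ2 : CliquesAreCircuits m A) (hE : A.E = cK univ)
    (hm : 0 < m) (hM : (W₁ ∩ W₂).ncard = m - 1) (hx : x ∈ W₁ \ W₂) (hy : y ∈ W₂ \ W₁)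
    (hy' : y' ∈ W₂ \ W₁) (hxy : s(x, y) ∈ A.closure (cK W₁ ∪ cK W₂)) :
    s(x, y') ∈ A.closure (cK W₁ ∪ cK W₂) := by
  obtain rfl | hyy' := eq_or_ne y y'
  · exact hxy
  have hG : cK W₁ ∪ cK W₂ ⊆ A.closure (cK W₁ ∪ cK W₂) :=
    A.subset_closure _ (union_subset (cK_subset_ground hE W₁) (cK_subset_ground hE W₂))
  have hW : (insert y (W₁ ∩ W₂)).ncard = m := by
    rw [ncard_insert_of_notMem fun h => hy.2 h.1, hM]
    omega
  refine hZ2.pair_mem_closure hW ?_ ?_ (ne_of_mem_of_not_mem hx.1 hy'.2) ?_ ?_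
  · rintro (rfl | h)
    exacts [hy.2 hx.1, hx.2 h.2]
  · rintro (rfl | h)
    exacts [hyy' rfl, hy'.2 h.1]
  · refine cK_insert_insert_subset.trans (insert_subset hxy (union_subset ?_ ?_))
    · exact (cK_mono (insert_subset hx.1 inter_subset_left)).trans (subset_union_left.trans hG)
    · exact (cK_mono (insert_subset hy.1 inter_subset_right)).trans (subset_union_right.trans hG)
  · refine (cK_mono ?_).trans (subset_union_right.trans hG)
    exact insert_subset hy'.1 (insert_subset hy.1 inter_subset_right)

lemma closure_cK_union_cK_eq (hZ2 : CliquesAreCircuits m A) (hE : A.E = cK univ) (hm : 0 < m)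
    (hcover : W₁ ∪ W₂ = univ) (hM : (W₁ ∩ W₂).ncard = m - 1) (hx : x ∈ W₁ \ W₂)
    (hy : y ∈ W₂ \ W₁) (hxy : s(x, y) ∈ A.closure (cK W₁ ∪ cK W₂)) :
    A.closure (cK W₁ ∪ cK W₂) = cK univ := by
  have hcross : ∀ p ∈ W₁ \ W₂, ∀ q ∈ W₂ \ W₁, s(p, q) ∈ A.closure (cK W₁ ∪ cK W₂) := by
    intro p hp q hq
    have hxq := hZ2.pair_mem_closure_of_cross hE hm hM hx hy hq hxy
    rw [Sym2.eq_swap, union_comm] at hxq ⊢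
    exact hZ2.pair_mem_closure_of_cross hE hm (inter_comm W₁ W₂ ▸ hM) hq hx hp hxq
  have hG : cK W₁ ∪ cK W₂ ⊆ A.closure (cK W₁ ∪ cK W₂) :=
    A.subset_closure _ (union_subset (cK_subset_ground hE W₁) (cK_subset_ground hE W₂))
  refine (hE ▸ A.closure_subset_ground _).antisymm ?_
  rw [← hcover]
  refine cK_union_subset.trans (union_subset hG ?_)
  rintro _ ⟨p, hp, q, hq, rfl⟩
  exact hcross p hp q hq

lemma eRk_cK_union_cK_lt (hZ2 : CliquesAreCircuits m A) (hZ1 : CircuitValenceBound m A)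
    (hE : A.E = cK univ) (hm : 0 < m) (hcover : W₁ ∪ W₂ = univ)
    (hM : (W₁ ∩ W₂).ncard = m - 1) (hx : x ∈ W₁ \ W₂) (hy : y ∈ W₂ \ W₁) :
    A.eRk (cK W₁ ∪ cK W₂) < A.eRk (cK univ) := by
  have hW₁ : m ≤ W₁.ncard := by
    have h := ncard_le_ncard (insert_subset hx.1 (inter_subset_left (t := W₂)))
    rwa [ncard_insert_of_notMem fun h => hx.2 h.2, hM, Nat.sub_add_cancel hm] at h
  have hW₂ : m ≤ W₂.ncard := by
    have h := ncard_le_ncard (insert_subset hy.1 (inter_subset_right (s := W₁)))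
    rwa [ncard_insert_of_notMem fun h => hy.2 h.1, hM, Nat.sub_add_cancel hm] at h
  have h₁ := hZ2.eRk_cK hZ1 hE hW₁
  have h₂ := hZ2.eRk_cK hZ1 hE hW₂
  have h₀ := hZ2.eRk_cK hZ1 hE (hW₁.trans (ncard_le_ncard (subset_univ W₁)))
  have hsub := A.eRk_inter_add_eRk_union_le (cK W₁) (cK W₂)
  rw [← cK_inter, (hZ1.indep_cK hE (by omega)).eRk_eq_encard,
    ← (cK _).toFinite.cast_ncard_eq, ncard_cK, hM] at hsub
  have hcard := ncard_union_add_ncard_inter W₁ W₂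
  rw [hcover, hM] at hcard
  have hmul : m * W₁.ncard + m * W₂.ncard = m * (univ : Set V).ncard + m * (m - 1) := by
    rw [← mul_add, ← hcard, mul_add]
  have hchoose := Nat.choose_two_pred_add_choose_two_succ hm
  have hfin : ∀ X, A.eRk X ≠ ⊤ := fun X =>
    ne_top_of_le_ne_top X.toFinite.encard_lt_top.ne (A.eRk_le_encard X)
  lift A.eRk (cK W₁ ∪ cK W₂) to ℕ using hfin _ with r
  lift A.eRk (cK W₁) to ℕ using hfin _ with r₁
  lift A.eRk (cK W₂) to ℕ using hfin _ with r₂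
  lift A.eRk (cK univ) to ℕ using hfin _ with r₀
  norm_cast at h₀ h₁ h₂ hsub ⊢
  omega

lemma pair_notMem_closure_cK_union_cK (hZ2 : CliquesAreCircuits m A)
    (hZ1 : CircuitValenceBound m A) (hE : A.E = cK univ) (hm : 0 < m) (hcover : W₁ ∪ W₂ = univ)
    (hM : (W₁ ∩ W₂).ncard = m - 1) (hx : x ∈ W₁ \ W₂) (hy : y ∈ W₂ \ W₁) :
    s(x, y) ∉ A.closure (cK W₁ ∪ cK W₂) := by
  intro hxy
  have h := hZ2.eRk_cK_union_cK_lt hZ1 hE hm hcover hM hx hy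
  rw [← A.eRk_closure_eq, hZ2.closure_cK_union_cK_eq hE hm hcover hM hx hy hxy] at h
  exact h.false

end CliquesAreCircuits

lemma exists_cover_of_ncard_inter_lt {V : Type*} [Finite V] {m : ℕ} {S T : Set V} {x y : V}
    (hV : m + 1 ≤ Nat.card V) (hST : (S ∩ T).ncard < m) (hx : x ∈ S \ T) (hy : y ∈ T \ S) :
    ∃ W₁ W₂ : Set V, S ⊆ W₁ ∧ T ⊆ W₂ ∧ W₁ ∪ W₂ = univ ∧ (W₁ ∩ W₂).ncard = m - 1 ∧
      x ∈ W₁ \ W₂ ∧ y ∈ W₂ \ W₁ := by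
  set Q := insert x (insert y (S ∩ T))
  have hQ : Q.ncard ≤ (S ∩ T).ncard + 2 :=
    (ncard_insert_le _ _).trans (Nat.add_le_add_right (ncard_insert_le _ _) 1)
  have hQc : m - 1 - (S ∩ T).ncard ≤ Qᶜ.ncard := by
    rw [ncard_compl]
    omega
  obtain ⟨P, hPQ, hP⟩ := exists_subset_card_eq hQc
  have hPST : Disjoint (S ∩ T) P := by
    rw [disjoint_right]
    exact fun p hp hpST => hPQ hp (mem_insert_of_mem _ (mem_insert_of_mem _ hpST))
  have hxP : x ∉ P := fun h => hPQ h (mem_insert _ _)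
  have hyP : y ∉ P := fun h => hPQ h (mem_insert_of_mem _ (mem_insert _ _))
  refine ⟨Tᶜ ∪ (S ∩ T ∪ P), T ∪ P, ?_, subset_union_left, ?_, ?_, ?_, ?_⟩
  · intro s hs
    by_cases hsT : s ∈ T
    exacts [Or.inr (Or.inl ⟨hs, hsT⟩), Or.inl hsT]
  · ext z
    simp only [mem_union, mem_compl_iff, mem_univ, iff_true]
    tauto
  · have h : (Tᶜ ∪ (S ∩ T ∪ P)) ∩ (T ∪ P) = S ∩ T ∪ P := by
      ext z
      simp only [mem_inter_iff, mem_union, mem_compl_iff]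
      tauto
    rw [h, ncard_union_eq hPST, hP]
    omega
  · simp only [mem_sdiff, mem_union, mem_compl_iff, mem_inter_iff] at hx hy ⊢
    tauto
  · simp only [mem_sdiff, mem_union, mem_compl_iff, mem_inter_iff] at hx hy ⊢
    tauto

namespace CircuitValenceBound

variable {V : Type*} [Finite V] {m : ℕ} {A : Matroid (Sym2 V)} {E F : Set (Sym2 V)}

lemma closure_union_subset (hZ1 : CircuitValenceBound m A) (hZ2 : CliquesAreCircuits m A)
    (hE : A.E = cK univ) (hm : 0 < m) (hV : m + 1 ≤ Nat.card V) (hEK : E ⊆ cK univ)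
    (hFK : F ⊆ cK univ) (hST : (supp E ∩ supp F).ncard < m) :
    A.closure (E ∪ F) ⊆ cK (supp E) ∪ cK (supp F) := by
  have hcl : A.closure (E ∪ F) ⊆ A.closure (cK (supp E) ∪ cK (supp F)) :=
    A.closure_subset_closure (union_subset_union (subset_cK_supp hEK) (subset_cK_supp hFK))
  have hST' : A.closure (cK (supp E) ∪ cK (supp F)) ⊆ cK (supp E ∪ supp F) := by
    rw [← hZ1.closure_cK hm hE (supp E ∪ supp F)]
    exact A.closure_subset_closure
      (union_subset (cK_mono subset_union_left) (cK_mono subset_union_right))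
  intro e he
  obtain h | ⟨x, hx, y, hy, rfl⟩ := cK_union_subset (hST' (hcl he))
  · exact h
  obtain ⟨W₁, W₂, hSW, hTW, hcover, hM, hxW, hyW⟩ := exists_cover_of_ncard_inter_lt hV hST hx hy
  refine absurd ?_ (hZ2.pair_notMem_closure_cK_union_cK hZ1 hE hm hcover hM hxW hyW)
  exact A.closure_subset_closure (union_subset_union (cK_mono hSW) (cK_mono hTW)) (hcl he)

lemma rigid_union (hZ1 : CircuitValenceBound m A) (hZ2 : CliquesAreCircuits m A)
    (hE : A.E = cK univ) (hm : 0 < m) (hEK : E ⊆ cK univ) (hFK : F ⊆ cK univ)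
    (hER : Rigid A E) (hFR : Rigid A F) (hST : m ≤ (supp E ∩ supp F).ncard) :
    Rigid A (E ∪ F) := by
  have hS : cK (supp E) ⊆ A.closure (E ∪ F) := hER ▸ A.closure_subset_closure subset_union_left
  have hT : cK (supp F) ⊆ A.closure (E ∪ F) := hFR ▸ A.closure_subset_closure subset_union_right
  rw [Rigid, supp_union]
  refine subset_antisymm ?_ (cK_union_subset.trans (union_subset (union_subset hS hT) ?_))
  · rw [← hZ1.closure_cK hm hE (supp E ∪ supp F)]
    exact A.closure_subset_closure (union_subset_union (subset_cK_supp hEK) (subset_cK_supp hFK)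
      |>.trans (union_subset (cK_mono subset_union_left) (cK_mono subset_union_right)))
  rintro _ ⟨p, hp, q, hq, rfl⟩
  obtain ⟨W, hW, hWm⟩ := exists_subset_card_eq hST
  refine hZ2.pair_mem_closure hWm (fun h => hp.2 (hW h).2) (fun h => hq.2 (hW h).1)
    (ne_of_mem_of_not_mem hp.1 hq.2) ?_ ?_
  · exact (cK_mono (insert_subset hp.1 (hW.trans inter_subset_left))).trans hS
  · exact (cK_mono (insert_subset hq.1 (hW.trans inter_subset_right))).trans hT

lemma isARMOn (hZ1 : CircuitValenceBound m A) (hZ2 : CliquesAreCircuits m A)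
    (hE : A.E = cK univ) (hm : 0 < m) (hV : m + 1 ≤ Nat.card V) : IsARMOn m univ A :=
  ⟨hE, fun _ _ hEK hFK hST => hZ1.closure_union_subset hZ2 hE hm hV hEK hFK hST,
    fun _ _ hEK hFK hER hFR hST => hZ1.rigid_union hZ2 hE hm hEK hFK hER hFR hST⟩

end CircuitValenceBound

namespace IsARMOn

variable {V : Type*} {m : ℕ} {A : Matroid (Sym2 V)} {S U : Set V} {X : Set (Sym2 V)}

lemma closure_subset_cK_supp (hA : IsARMOn m univ A) (hm : 0 < m) (hX : X ⊆ cK univ) :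
    A.closure X ⊆ cK (supp X) := by
  simpa [supp_empty, cK_empty] using hA.2.1 X ∅ hX (empty_subset _) (by simpa [supp_empty])

lemma rigid_cK (hA : IsARMOn m univ A) (hm : 0 < m) (hS : 1 < S.ncard) : Rigid A (cK S) := by
  have hSK : cK S ⊆ cK univ := cK_mono (subset_univ S)
  have h := hA.closure_subset_cK_supp hm hSK
  rw [supp_cK hS] at h
  rw [Rigid, supp_cK hS]
  exact h.antisymm (A.subset_closure _ (cK_subset_ground hA.1 S))

variable [Finite V]

lemma circuitValenceBound (hA : IsARMOn m univ A) : CircuitValenceBound m A := by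
  intro C hC v ⟨e₀, he₀, hve₀⟩
  by_contra! hval
  have hCK : C ⊆ cK univ := hA.1 ▸ hC.subset_ground
  set E := {e ∈ C | v ∉ e}
  set F := {e ∈ C | v ∈ e} \ {e₀}
  have hEF : E ∪ F = C \ {e₀} := by
    ext e
    simp only [E, F, mem_union, mem_sdiff, mem_singleton_iff, mem_ofPred_eq]
    grind
  have hvE : v ∉ supp E := fun ⟨_, he, hve⟩ => he.2 hve
  have hinter : (supp E ∩ supp F).ncard < m := by
    have hmaps : ∀ w ∈ supp E ∩ supp F, s(v, w) ∈ F := by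
      rintro w ⟨hwE, f, hfF, hwf⟩
      have hvw : v ≠ w := fun h => hvE (h ▸ hwE)
      exact (Sym2.mem_and_mem_iff hvw).1 ⟨hfF.1.2, hwf⟩ ▸ hfF
    have h₁ := ncard_le_ncard_of_injOn _ hmaps fun _ _ _ _ => Sym2.congr_right.1
    have h₂ : F.ncard = valence C v - 1 := ncard_sdiff_singleton_of_mem ⟨he₀, hve₀⟩
    have h₃ : 0 < valence C v := (ncard_pos (toFinite _)).2 ⟨e₀, he₀, hve₀⟩
    omega
  have hcl := hA.2.1 E F ((sep_subset _ _).trans hCK)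
    (sdiff_subset.trans ((sep_subset _ _).trans hCK)) hinter
  rw [hEF] at hcl
  obtain ⟨w, rfl⟩ := Sym2.mem_iff_exists.1 hve₀
  rcases hcl (hC.mem_closure_sdiff_singleton_of_mem he₀) with h | h
  · exact hvE (h.2 v (Sym2.mem_mk_left v w))
  · obtain ⟨f, hfF, hwf⟩ := h.2 w (Sym2.mem_mk_right v w)
    have hvw : v ≠ w := fun hvw => h.1 (hvw ▸ Sym2.diag_isDiag v)
    exact hfF.2 ((Sym2.mem_and_mem_iff hvw).1 ⟨hfF.1.2, hwf⟩)

lemma dep_cK (hA : IsARMOn m univ A) (hm : 0 < m) (hU : U.ncard = m + 2) : A.Dep (cK U) := by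
  obtain ⟨a, c, ha, hc, hac⟩ := (one_lt_ncard_iff U.toFinite).1 (by omega : 1 < U.ncard)
  have hcard : ∀ z ∈ U, (U \ {z}).ncard = m + 1 := fun z hz => by
    rw [ncard_sdiff_singleton_of_mem hz, hU]
    rfl
  have hS₁ : 1 < (U \ {a}).ncard := by rw [hcard a ha]; omega
  have hS₂ : 1 < (U \ {c}).ncard := by rw [hcard c hc]; omega
  have hinter : ((U \ {a}) ∩ (U \ {c})).ncard = m := by
    have h : (U \ {a}) ∩ (U \ {c}) = (U \ {a}) \ {c} := by
      ext z
      simp only [mem_inter_iff, mem_sdiff, mem_singleton_iff]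
      tauto
    rw [h, ncard_sdiff_singleton_of_mem (show c ∈ U \ {a} from ⟨hc, hac.symm⟩), hcard a ha]
    rfl
  have hrigid := hA.2.2 _ _ (cK_mono (subset_univ _)) (cK_mono (subset_univ _))
    (hA.rigid_cK hm hS₁) (hA.rigid_cK hm hS₂) (by rw [supp_cK hS₁, supp_cK hS₂, hinter])
  rw [Rigid, supp_union, supp_cK hS₁, supp_cK hS₂, ← sdiff_inter,
    singleton_inter_eq_empty.2 (show a ∉ ({c} : Set V) from hac), sdiff_empty,
    ← cK_sdiff_pair hac] at hrigid
  have hacU : s(a, c) ∈ cK U := pair_mem_cK.2 ⟨hac, ha, hc⟩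
  exact ⟨fun hind => hind.notMem_closure_sdiff_of_mem hacU (hrigid.symm ▸ hacU),
    cK_subset_ground hA.1 U⟩

lemma cliquesAreCircuits (hA : IsARMOn m univ A) (hm : 0 < m) : CliquesAreCircuits m A := by
  intro U hU
  obtain ⟨C, hCU, hC⟩ := (hA.dep_cK hm hU).exists_isCircuit_subset
  exact hA.circuitValenceBound.eq_cK_of_isCircuit_subset hU hC hCU ▸ hC

end IsARMOn

theorem stmt_14_general {V : Type*} [Fintype V] (m : ℕ) (hm : 0 < m)
    (hV : m + 1 ≤ Fintype.card V)
    (A : Matroid (Sym2 V)) (hE : A.E = cK (univ : Set V)) :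
    IsARMOn m (univ : Set V) A ↔
      ((∀ C, A.IsCircuit' C → ∀ v ∈ supp C, m + 1 ≤ valence C v) ∧
       (∀ U : Set V, U.ncard = m + 2 → A.IsCircuit' (cK U))) := by
  simp only [isCircuit'_iff_isCircuit]
  refine ⟨fun hA => ⟨hA.circuitValenceBound, hA.cliquesAreCircuits hm⟩, fun ⟨hZ1, hZ2⟩ => ?_⟩
  exact CircuitValenceBound.isARMOn hZ1 hZ2 hE hm (Nat.card_eq_fintype_card (α := V) ▸ hV)

theorem stmt_14 {V : Type*} [Fintype V] [DecidableEq V] (m : ℕ) (hm : 0 < m)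
    (hV : m + 1 ≤ Fintype.card V)
    (A : Matroid (Sym2 V)) (hE : A.E = cK (univ : Set V)) :
    IsARMOn m (univ : Set V) A ↔
      ((∀ C, A.IsCircuit' C → ∀ v ∈ supp C, m + 1 ≤ valence C v) ∧
       (∀ U : Set V, U.ncard = m + 2 → A.IsCircuit' (cK U))) :=
  stmt_14_general m hm hV A hE
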